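/- Duality between grafting/raising and cutting/lowering on 𝕍 (Definitions 'def_grafting_explicit', 'def_increasing_poly' together with Remark 'rem:formula for hgraft'): For every (𝔱,p) ∈ 𝒪, the recursively defined grafting operator ⋖̂_{(𝔱,p)} is adjoint to the cutting operator ⋖̂*_{(𝔱,p)}: 𝕍 → 𝕍 ⊗ 𝕍 given on trees τ = T^𝔪_𝔣 by ⋖̂*_{(𝔱,p)} τ := Σ_{0≤k≤p} Σ_{(x,y)∈E_T} (1_{𝔣(x,y)=(𝔱,k)}/(p−k)!) · P^{(x,y)}τ ⊗ (R^{(x,y)}τ)+_x^{p−k}; that is, ⟨τ ⋖̂_{(𝔱,p)} τ̄, σ⟩ = ⟨τ ⊗ τ̄, ⋖̂*_{(𝔱,p)} σ⟩ for all τ, τ̄, σ ∈ 𝒱. Similarly, for every i ∈ {0,…,d}, ⟨↑̂_i τ̄, τ⟩ = ⟨τ̄, ↑̂*_i τ⟩ for all τ, τ̄ ∈ 𝒱, where ↑̂*_i τ := Σ_{x∈N_T} 𝔪^X(x)[i] · τ−_x^{e_i}. -/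

import Mathlib

/-
Common framework: multi-indices, the algebra of smooth functions on ℝ^𝒪,
and the spaces of decorated trees 𝒱 and 𝔅 of [Bruned–Chandra–Chevyrev–Hairer,
"Renormalising SPDEs in regularity structures"], presented abstractly together
with the defining recursions of the various operators on them.
-/

open scoped BigOperators Classical

namespace SPDERenorm

/-! ### Multi-indices in `ℕ^{d+1}` -/

abbrev MIdx (d : ℕ) := Fin (d+1) → ℕ

/-- `k! = ∏ᵢ k[i]!`. -/
def mfact {d : ℕ} (k : MIdx d) : ℕ := ∏ i, Nat.factorial (k i)

/-- `C(k,ℓ) = ∏ᵢ binom(k[i], ℓ[i])`. -/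
def mchoose {d : ℕ} (k l : MIdx d) : ℕ := ∏ i, Nat.choose (k i) (l i)

/-- `|k| = Σᵢ k[i]`. -/
def msize {d : ℕ} (k : MIdx d) : ℕ := ∑ i, k i

/-- The unit multi-index `e_i`. -/
def munit {d : ℕ} (i : Fin (d+1)) : MIdx d := Pi.single i 1

/-- Sum of `f ℓ` over all multi-indices `ℓ ≤ m` (componentwise). -/
noncomputable def msum {d : ℕ} {A : Type*} [AddCommMonoid A] (m : MIdx d) (f : MIdx d → A) : A :=
  ∑ e : (∀ i : Fin (d+1), Fin (m i + 1)), f fun i => (e i : ℕ)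

/-- The scaled size `|k|_𝔰 = Σᵢ k[i]·𝔰ᵢ`. -/
noncomputable def wdeg {d : ℕ} (s : Fin (d+1) → ℝ) (k : MIdx d) : ℝ := ∑ i, (k i : ℝ) * s i

/-- The index set `𝒪 = 𝔏₊ × ℕ^{d+1}`. -/
abbrev Odx (Lp : Type) (d : ℕ) := Lp × MIdx d

/-! ### Functions on `ℝ^𝒪` and differential operators -/

/-- Real-valued functions on `ℝ^𝒪`. -/
abbrev FnO (Lp : Type) (d : ℕ) := (Odx Lp d → ℝ) → ℝ

/-- The coordinate function `𝒳_o`. -/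
def Xc {Lp : Type} {d : ℕ} (o : Odx Lp d) : FnO Lp d := fun x => x o

/-- The partial derivative `D_o` in the `o`-th coordinate. -/
noncomputable def Dpart {Lp : Type} {d : ℕ} [DecidableEq Lp] (o : Odx Lp d) (F : FnO Lp d) :
    FnO Lp d :=
  fun x => deriv (fun t : ℝ => F (Function.update x o t)) (x o)

/-- Iterated partial derivatives `D_{o₁} ∘ ⋯ ∘ D_{oₙ}` over a list. -/
noncomputable def Dlist {Lp : Type} {d : ℕ} [DecidableEq Lp] (L : List (Odx Lp d))
    (F : FnO Lp d) : FnO Lp d :=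
  L.foldr Dpart F

/-- The derivation `∂_i F = Σ_{(𝔱,p)} 𝒳_{(𝔱,p+e_i)} · D_{(𝔱,p)} F`. -/
noncomputable def pderivO {Lp : Type} {d : ℕ} [DecidableEq Lp] (i : Fin (d+1)) (F : FnO Lp d) :
    FnO Lp d :=
  fun x => ∑ᶠ o : Odx Lp d, Xc (o.1, o.2 + munit i) x * Dpart o F x

/-- `∂^k = ∏ᵢ ∂ᵢ^{k[i]}`. -/
noncomputable def mpderiv {Lp : Type} {d : ℕ} [DecidableEq Lp] (k : MIdx d) (F : FnO Lp d) :
    FnO Lp d :=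
  (List.finRange (d+1)).foldr (fun i G => (pderivO i)^[k i] G) F

/-- `D^α` for a finitely supported `α ∈ ℕ^𝒪`. -/
noncomputable def Dexp {Lp : Type} {d : ℕ} [DecidableEq Lp] (α : Odx Lp d →₀ ℕ)
    (F : FnO Lp d) : FnO Lp d :=
  Dlist (Finsupp.toMultiset α).toList F

/-- `α! = ∏_o α[o]!`. -/
def afact {Lp : Type} {d : ℕ} (α : Odx Lp d →₀ ℕ) : ℕ := α.prod fun _ n => Nat.factorial n

/-- The monomial `𝒳^α`. -/
noncomputable def Xpow {Lp : Type} {d : ℕ} (α : Odx Lp d →₀ ℕ) : FnO Lp d :=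
  fun x => α.prod fun o n => x o ^ n

/-- `F` depends only on the coordinates in `s`. -/
def DependsOnlyOn {Lp : Type} {d : ℕ} (F : FnO Lp d) (s : Set (Odx Lp d)) : Prop :=
  ∀ x y, (∀ o ∈ s, x o = y o) → F x = F y

/-- Membership in `𝒞_𝒪`: smooth functions depending on finitely many coordinates. -/
def IsSmoothCO {Lp : Type} {d : ℕ} (F : FnO Lp d) : Prop :=
  ∃ (s : Finset (Odx Lp d)) (g : (↥s → ℝ) → ℝ),
    ContDiff ℝ (⊤ : ℕ∞) g ∧ ∀ x, F x = g fun o => x o.1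

/-- Membership in `𝒫 ⊆ 𝒞_𝒪` (relative to the partition `𝒪 = 𝒪₊ ⊔ 𝒪₋`). -/
def IsP {Lp : Type} {d : ℕ} (Om Op : Set (Odx Lp d)) (F : FnO Lp d) : Prop :=
  ∃ (m : ℕ) (α : Fin m → (Odx Lp d →₀ ℕ)) (G : Fin m → FnO Lp d),
    Function.Injective α ∧
    (∀ j, ∀ o ∈ (α j).support, o ∈ Om) ∧
    (∀ j, IsSmoothCO (G j)) ∧
    (∀ j, G j ≠ 0) ∧
    (∀ j, DependsOnlyOn (G j) Op) ∧
    F = fun x => ∑ j, G j x * Xpow (α j) x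

/-- `F` is a real polynomial in finitely many of the coordinate functions. -/
def IsPolyFn {Lp : Type} {d : ℕ} (F : FnO Lp d) : Prop :=
  ∃ (s : Finset (Odx Lp d)) (P : MvPolynomial (↥s) ℝ),
    ∀ x, F x = MvPolynomial.eval (fun o => x o.1) P

/-! ### The trees of `𝒱` -/

/-- The set `𝒱` of decorated rooted trees, presented abstractly: a tree is uniquely
built from a root decoration `(𝔩,k) ∈ 𝔇 × ℕ^{d+1}` and a multiset of decorated branches,
and every tree arises this way (induction). -/
structure TreeV (Lp Dr : Type) (d : ℕ) where
  V : Type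
  node : Dr → MIdx d → Multiset (Odx Lp d × V) → V
  node_bij : Function.Bijective
    (fun x : Dr × MIdx d × Multiset (Odx Lp d × V) => node x.1 x.2.1 x.2.2)
  ind : ∀ P : V → Prop,
    (∀ l k (M : Multiset (Odx Lp d × V)), (∀ x ∈ M, P x.2) → P (node l k M)) → ∀ τ, P τ

namespace TreeV

variable {Lp Dr : Type} {d : ℕ} (S : TreeV Lp Dr d)

/-- Rebuild a tree after replacing the `j`-th branch by a linear combination of trees. -/
noncomputable def replace (l : Dr) (k : MIdx d) (L : List (Odx Lp d × S.V))
    (j : Fin L.length) (w : S.V →₀ ℝ) : S.V →₀ ℝ :=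
  w.sum fun τ' c => Finsupp.single (S.node l k (↑(L.set j ((L.get j).1, τ')))) c

/-- Decomposition of a tree into its root decoration and branches. -/
noncomputable def dec : S.V ≃ Dr × MIdx d × Multiset (Odx Lp d × S.V) :=
  (Equiv.ofBijective _ S.node_bij).symm

/-- The polynomial decoration at the root. -/
noncomputable def polyOf (τ : S.V) : MIdx d := (S.dec τ).2.1

/-- The multiset of branches at the root. -/
noncomputable def branchesOf (τ : S.V) : Multiset (Odx Lp d × S.V) := (S.dec τ).2.2

/-- The commutative tree product merging the roots of `g 0, …, g (n-1)`
(adding the polynomial decorations), the merged root receiving the driver label `l`. -/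
noncomputable def merge (l : Dr) {n : ℕ} (g : Fin n → S.V) : S.V :=
  S.node l (∑ r, S.polyOf (g r)) (∑ r, S.branchesOf (g r))

/-- Defining recursion of the grafting operators `⋖̂_o : 𝕍 ⊗ 𝕍 → 𝕍`. -/
def GraftSpec [DecidableEq Lp] (graft : Odx Lp d → S.V → S.V → (S.V →₀ ℝ)) : Prop :=
  ∀ (t : Lp) (p : MIdx d) (τ : S.V) (l : Dr) (k : MIdx d) (L : List (Odx Lp d × S.V)),
    graft (t, p) τ (S.node l k ↑L) =
      msum (k ⊓ p) (fun ℓ =>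
        (mchoose k ℓ : ℝ) •
          Finsupp.single (S.node l (k - ℓ) (((t, p - ℓ), τ) ::ₘ (↑L : Multiset _))) 1)
      + ∑ j : Fin L.length, S.replace l k L j (graft (t, p) τ (L.get j).2)

/-- Defining recursion of the symmetry factor `S(τ)`. -/
def SymSpec [DecidableEq Lp] [DecidableEq S.V] (sym : S.V → ℕ) : Prop :=
  ∀ (l : Dr) (k : MIdx d) (M : Multiset (Odx Lp d × S.V)),
    sym (S.node l k M) =
      mfact k * ∏ x ∈ M.toFinset, Nat.factorial (M.count x) * sym x.2 ^ M.count x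

/-- Defining recursion of the inner product on `𝕍`. -/
def IPSpec (ip : S.V → S.V → ℝ) : Prop :=
  ∀ (l l' : Dr) (k k' : MIdx d) (L L' : List (Odx Lp d × S.V)),
    ip (S.node l k ↑L) (S.node l' k' ↑L') =
      (if l = l' ∧ k = k' then (mfact k : ℝ) else 0) *
        ∑ s : Fin L.length ≃ Fin L'.length,
          ∏ j : Fin L.length,
            (if (L.get j).1 = (L'.get (s j)).1 then ip (L.get j).2 (L'.get (s j)).2 else 0)

/-- Defining recursion of `Υ^F`. -/
def UpsSpec [DecidableEq Lp] (F : Lp → Dr → FnO Lp d) (Ups : Lp → S.V → FnO Lp d) : Prop :=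
  ∀ (t : Lp) (l : Dr) (k : MIdx d) (L : List (Odx Lp d × S.V)),
    Ups t (S.node l k ↑L) = fun x =>
      (∏ j : Fin L.length, Ups (L.get j).1.1 (L.get j).2 x) *
        mpderiv k (Dlist (L.map Prod.fst) (F t l)) x

/-- Defining recursion of the raising operator `↑̂_i` on `𝕍`. -/
def RaiseSpec (raise : Fin (d+1) → S.V → (S.V →₀ ℝ)) : Prop :=
  ∀ (i : Fin (d+1)) (l : Dr) (k : MIdx d) (L : List (Odx Lp d × S.V)),
    raise i (S.node l k ↑L) =
      Finsupp.single (S.node l (k + munit i) ↑L) 1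
      + ∑ j : Fin L.length, S.replace l k L j (raise i (L.get j).2)

/-- Defining recursion of the cutting operator `⋖̂*_o : 𝕍 → 𝕍 ⊗ 𝕍` (elements of
`𝕍 ⊗ 𝕍` represented as finitely supported functions on pairs of trees, a pair
`(branch, trunk)` recording a cut). -/
def CutSpec [DecidableEq Lp] (cut : Odx Lp d → S.V → (S.V × S.V →₀ ℝ)) : Prop :=
  ∀ (t : Lp) (p : MIdx d) (l : Dr) (k : MIdx d) (L : List (Odx Lp d × S.V)),
    cut (t, p) (S.node l k ↑L) =
      (∑ j : Fin L.length,
        if (L.get j).1.1 = t ∧ (L.get j).1.2 ≤ p then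
          ((mfact (p - (L.get j).1.2) : ℝ))⁻¹ •
            Finsupp.single ((L.get j).2,
              S.node l (k + (p - (L.get j).1.2)) ↑(L.eraseIdx j)) 1
        else 0)
      + ∑ j : Fin L.length,
          (cut (t, p) (L.get j).2).sum fun ab c =>
            Finsupp.single (ab.1, S.node l k ↑(L.set j ((L.get j).1, ab.2))) c

/-- Defining recursion of the lowering operator `↑̂*_i` on `𝕍`. -/
def LowSpec (low : Fin (d+1) → S.V → (S.V →₀ ℝ)) : Prop :=
  ∀ (i : Fin (d+1)) (l : Dr) (k : MIdx d) (L : List (Odx Lp d × S.V)),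
    low i (S.node l k ↑L) =
      (k i : ℝ) • Finsupp.single (S.node l (k - munit i) ↑L) 1
      + ∑ j : Fin L.length, S.replace l k L j (low i (L.get j).2)

/-- Defining recursion of the predicate "`τ` is `𝔱`-non-vanishing for `F`". -/
def NVSpec [DecidableEq Lp] (F : Lp → Dr → FnO Lp d) (NV : Lp → S.V → Prop) : Prop :=
  ∀ (t : Lp) (l : Dr) (k : MIdx d) (L : List (Odx Lp d × S.V)),
    NV t (S.node l k ↑L) ↔
      (mpderiv k (Dlist (L.map Prod.fst) (F t l)) ≠ 0 ∧
        ∀ j : Fin L.length, NV (L.get j).1.1 (L.get j).2)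

/-- The coefficient series of `U_o − u_o·𝟏`, for the jet `U` with Taylor coefficients `u`
and planted-tree coefficients `c_𝔱(τ)/S(τ)`. -/
noncomputable def uSeries (z : Dr) (u : Odx Lp d → ℝ) (c : Lp → S.V → ℝ) (sym : S.V → ℕ)
    (o : Odx Lp d) (σ : S.V) : ℝ :=
  (∑ᶠ q : MIdx d, if q ≠ 0 ∧ σ = S.node z q 0 then u (o.1, o.2 + q) / (mfact q : ℝ) else 0) +
  ∑ᶠ τ : S.V, if σ = S.node z 0 {(o, τ)} then c o.1 τ / (sym τ : ℝ) else 0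

/-- The coefficient series of the product `(U − u·𝟏)^α · Ξ_l`, expanded by multilinearity
using the commutative tree product merging the roots. -/
noncomputable def powCoef (coef : Odx Lp d → S.V → ℝ) (l : Dr) (α : Odx Lp d →₀ ℕ)
    (σ : S.V) : ℝ :=
  ∑ᶠ g : Fin (Finsupp.toMultiset α).toList.length → S.V,
    (∏ r, coef ((Finsupp.toMultiset α).toList.get r) (g r)) *
      (if σ = S.merge l g then 1 else 0)

/-- The coefficient series of `Σ_{𝔩∈𝔇} F^𝔩_𝔱(U)·Ξ_𝔩`, where
`F^𝔩_𝔱(U)·Ξ_𝔩 = Σ_α (D^α F^𝔩_𝔱(u)/α!)·(U − u·𝟏)^α·Ξ_𝔩`. -/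
noncomputable def lhsCoef [DecidableEq Lp] (F : Lp → Dr → FnO Lp d) (u : Odx Lp d → ℝ)
    (coef : Odx Lp d → S.V → ℝ) (t : Lp) (σ : S.V) : ℝ :=
  ∑ᶠ l : Dr, ∑ᶠ α : Odx Lp d →₀ ℕ,
    Dexp α (F t l) u / (afact α : ℝ) * S.powCoef coef l α σ

/-- Defining recursion of the 𝔰-degree `|·|_𝔰` of decorated trees (with driver labels in
`𝔏₋ ⊔ {𝟎}`, encoded as `Option Lm` with `none = 𝟎`). -/
def DegSpec {Lm : Type} (S : TreeV Lp (Option Lm) d) (s : Fin (d+1) → ℝ)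
    (degL : Lp → ℝ) (degLm : Lm → ℝ) (deg : S.V → ℝ) : Prop :=
  ∀ (l : Option Lm) (k : MIdx d) (M : Multiset (Odx Lp d × S.V)),
    deg (S.node l k M) =
      l.elim 0 degLm + wdeg s k +
        ((M.map fun x => (degL x.1.1 - wdeg s x.1.2) + deg x.2).sum)

end TreeV

/-! ### The trees of `𝔅` -/

/-- Polynomial node-decoration factors `𝓘_{(𝔱,p)}[X^k]` with `p ≤ k` and `p ≠ k`;
an element is a pair `((𝔱,p), k)` subject to these constraints. -/
abbrev PolyDec (Lp : Type) (d : ℕ) :=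
  {x : Odx Lp d × MIdx d // x.1.2 ≤ x.2 ∧ x.1.2 ≠ x.2}

/-- Raise the polynomial exponent of a `PolyDec` by `e_i`. -/
def PolyDec.bump {Lp : Type} {d : ℕ} (pd : PolyDec Lp d) (i : Fin (d+1)) : PolyDec Lp d :=
  ⟨(pd.1.1, pd.1.2 + munit i), by
    constructor
    · exact fun j => le_trans (pd.2.1 j) (Nat.le_add_right _ _)
    · intro h
      have hi : pd.1.1.2 i ≤ pd.1.2 i := pd.2.1 i
      have h' : pd.1.1.2 i = pd.1.2 i + munit i i := congrFun h i
      simp only [munit, Pi.single_eq_same] at h'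
      omega⟩

/-- The fresh polynomial decoration `𝓘_{(𝔱,p)}[X^{p+e_i}]`. -/
def freshPD {Lp : Type} {d : ℕ} (o : Odx Lp d) (i : Fin (d+1)) : PolyDec Lp d :=
  ⟨(o, o.2 + munit i), by
    constructor
    · exact fun j => Nat.le_add_right _ _
    · intro h
      have h' : o.2 i = o.2 i + munit i i := congrFun h i
      simp only [munit, Pi.single_eq_same] at h'
      omega⟩

/-- Lower the polynomial exponent of a `PolyDec` by `e_i`. -/
def PolyDec.lower {Lp : Type} {d : ℕ} (pd : PolyDec Lp d) (i : Fin (d+1))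
    (h : pd.1.1.2 + munit i ≤ pd.1.2) (hne : ¬ pd.1.2 - munit i = pd.1.1.2) : PolyDec Lp d :=
  ⟨(pd.1.1, pd.1.2 - munit i), by
    constructor
    · intro j
      have hj := h j
      simp only [Pi.add_apply, Pi.sub_apply] at hj ⊢
      omega
    · exact fun hh => hne hh.symm⟩

/-- The set `𝔅` of decorated rooted trees with polynomial node decorations, presented
abstractly. -/
structure TreeB (Lp Dr : Type) (d : ℕ) where
  B : Type
  node : Dr → Multiset (PolyDec Lp d) → Multiset (Odx Lp d × B) → B
  node_bij : Function.Bijective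
    (fun x : Dr × Multiset (PolyDec Lp d) × Multiset (Odx Lp d × B) => node x.1 x.2.1 x.2.2)
  ind : ∀ P : B → Prop,
    (∀ l N (M : Multiset (Odx Lp d × B)), (∀ x ∈ M, P x.2) → P (node l N M)) → ∀ σ, P σ

namespace TreeB

variable {Lp Dr : Type} {d : ℕ} (S : TreeB Lp Dr d)

/-- Rebuild a tree after replacing the `j`-th branch by a linear combination of trees. -/
noncomputable def replace (l : Dr) (N : List (PolyDec Lp d)) (L : List (Odx Lp d × S.B))
    (j : Fin L.length) (w : S.B →₀ ℝ) : S.B →₀ ℝ :=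
  w.sum fun σ' c => Finsupp.single (S.node l ↑N (↑(L.set j ((L.get j).1, σ')))) c

/-- Defining recursion of `Υ̊^F`. -/
def UpsSpec [DecidableEq Lp] (F : Lp → Dr → FnO Lp d) (Ups : Lp → S.B → FnO Lp d) : Prop :=
  ∀ (t : Lp) (l : Dr) (N : List (PolyDec Lp d)) (L : List (Odx Lp d × S.B)),
    Ups t (S.node l ↑N ↑L) = fun x =>
      (∏ i : Fin N.length, x ((N.get i).1.1.1, (N.get i).1.2)) *
      (∏ j : Fin L.length, Ups (L.get j).1.1 (L.get j).2 x) *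
      Dlist (N.map (fun pd => pd.1.1) ++ L.map Prod.fst) (F t l) x

/-- Defining recursion of the grafting operators `⋖_o` on `𝔅`. -/
def GraftSpec (graft : Odx Lp d → S.B → S.B → (S.B →₀ ℝ)) : Prop :=
  ∀ (o : Odx Lp d) (σ' : S.B) (l : Dr) (N : List (PolyDec Lp d)) (L : List (Odx Lp d × S.B)),
    graft o σ' (S.node l ↑N ↑L) =
      Finsupp.single (S.node l ↑N ((o, σ') ::ₘ (↑L : Multiset _))) 1
      + (∑ j : Fin L.length, S.replace l N L j (graft o σ' (L.get j).2))
      + ∑ i : Fin N.length,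
          (if o = ((N.get i).1.1.1, (N.get i).1.2) then
            Finsupp.single
              (S.node l ↑(N.eraseIdx i) (((N.get i).1.1, σ') ::ₘ (↑L : Multiset _))) 1
          else 0)

/-- Defining recursion of the inner product on `𝔹`. -/
def IPSpec (ip : S.B → S.B → ℝ) : Prop :=
  ∀ (l l' : Dr) (N N' : List (PolyDec Lp d)) (L L' : List (Odx Lp d × S.B)),
    ip (S.node l ↑N ↑L) (S.node l' ↑N' ↑L') =
      (if l = l' then 1 else 0) *
      (∑ s : Fin N.length ≃ Fin N'.length,
        ∏ i : Fin N.length,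
          (if (N.get i).1 = (N'.get (s i)).1 then
            (mfact ((N.get i).1.2 - (N.get i).1.1.2) : ℝ)
          else 0)) *
      ∑ s : Fin L.length ≃ Fin L'.length,
        ∏ j : Fin L.length,
          (if (L.get j).1 = (L'.get (s j)).1 then ip (L.get j).2 (L'.get (s j)).2 else 0)

/-- Defining recursion of the raising operator `↑_i` on `𝔅`, producing a formal series
(represented by its coefficient function `𝔅 → ℝ`). -/
def RaiseSpec (raise : Fin (d+1) → S.B → (S.B → ℝ)) : Prop :=
  ∀ (i : Fin (d+1)) (l : Dr) (N : List (PolyDec Lp d)) (L : List (Odx Lp d × S.B)),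
    raise i (S.node l ↑N ↑L) = fun σ'' =>
      (∑ ib : Fin N.length,
        (if σ'' = S.node l ↑(N.set ib ((N.get ib).bump i)) ↑L then 1 else 0))
      + (if ∃ o : Odx Lp d, σ'' = S.node l (freshPD o i ::ₘ (↑N : Multiset _)) ↑L then 1 else 0)
      + ∑ j : Fin L.length,
          ∑ᶠ σ' : S.B,
            raise i (L.get j).2 σ' *
              (if σ'' = S.node l ↑N ↑(L.set j ((L.get j).1, σ')) then 1 else 0)

/-- Defining recursion of the lowering operator `↑*_i` on `𝔅`. -/
def LowSpec (low : Fin (d+1) → S.B → (S.B →₀ ℝ)) : Prop :=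
  ∀ (i : Fin (d+1)) (l : Dr) (N : List (PolyDec Lp d)) (L : List (Odx Lp d × S.B)),
    low i (S.node l ↑N ↑L) =
      (∑ ib : Fin N.length,
        (if h : (N.get ib).1.1.2 + munit i ≤ (N.get ib).1.2 then
          (((N.get ib).1.2 i - (N.get ib).1.1.2 i : ℕ) : ℝ) •
            (if he : (N.get ib).1.2 - munit i = (N.get ib).1.1.2 then
              Finsupp.single (S.node l ↑(N.eraseIdx ib) ↑L) 1
            else
              Finsupp.single (S.node l ↑(N.set ib ((N.get ib).lower i h he)) ↑L) 1)
        else 0))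
      + ∑ j : Fin L.length, S.replace l N L j (low i (L.get j).2)

/-- Defining recursion of the cutting operator `⋖*_o : 𝔹 → 𝔹 ⊗ 𝔹` (elements of
`𝔹 ⊗ 𝔹` represented as finitely supported functions on pairs of trees, a pair
`(branch, trunk)` recording a cut). -/
def CutSpec (cut : Odx Lp d → S.B → (S.B × S.B →₀ ℝ)) : Prop :=
  ∀ (t : Lp) (p : MIdx d) (l : Dr) (N : List (PolyDec Lp d)) (L : List (Odx Lp d × S.B)),
    cut (t, p) (S.node l ↑N ↑L) =
      (∑ j : Fin L.length,
        (if hc : (L.get j).1.1 = t ∧ (L.get j).1.2 ≤ p then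
          ((mfact (p - (L.get j).1.2) : ℝ))⁻¹ •
            Finsupp.single ((L.get j).2,
              S.node l
                (if he : (L.get j).1.2 = p then (↑N : Multiset (PolyDec Lp d))
                 else (⟨((L.get j).1, p), hc.2, he⟩ ::ₘ (↑N : Multiset (PolyDec Lp d))))
                ↑(L.eraseIdx j)) 1
        else 0))
      + ∑ j : Fin L.length,
          (cut (t, p) (L.get j).2).sum fun ab c =>
            Finsupp.single (ab.1, S.node l ↑N ↑(L.set j ((L.get j).1, ab.2))) c

end TreeB

/-- Defining recursion of the map `Q : 𝔹 → 𝕍` collapsing polynomial decorations. -/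
def QSpec {Lp Dr : Type} {d : ℕ} (SB : TreeB Lp Dr d) (SV : TreeV Lp Dr d)
    (Qf : SB.B → SV.V) : Prop :=
  ∀ (l : Dr) (N : Multiset (PolyDec Lp d)) (M : Multiset (Odx Lp d × SB.B)),
    Qf (SB.node l N M) =
      SV.node l ((N.map fun pd => pd.1.2 - pd.1.1.2).sum) (M.map fun x => (x.1, Qf x.2))

/-- The generic summand of the multivariate Faà di Bruno formula, indexed by `(r, q⃗, m⃗)`;
it vanishes unless `(q⃗, m⃗) ∈ I(r,k)`. -/
noncomputable def fdbSummand {Lp : Type} {d : ℕ} [DecidableEq Lp] (lo : LinearOrder (MIdx d))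
    (F : FnO Lp d) (k : MIdx d)
    (p : Σ r : ℕ, (Fin r → MIdx d) × (Fin r → (Odx Lp d →₀ ℕ))) : FnO Lp d :=
  if (∀ j, p.2.2 j ≠ 0) ∧ (∀ j j' : Fin p.1, j < j' → lo.lt (p.2.1 j) (p.2.1 j')) ∧
      (∀ j, lo.lt 0 (p.2.1 j)) ∧ (∑ j, ((p.2.2 j).sum fun _ n => n) • p.2.1 j) = k then
    fun x =>
      (∏ j, (p.2.2 j).prod fun o n =>
        (x (o.1, o.2 + p.2.1 j) / (mfact (p.2.1 j) : ℝ)) ^ n / (Nat.factorial n : ℝ)) *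
        Dexp (∑ j, p.2.2 j) F x
  else 0

/-! ### Generic decorated trees -/

/-- Decorated rooted trees over node species `N` and edge species `E`,
presented abstractly. -/
structure GTree (N E : Type) where
  T : Type
  node : N → Multiset (E × T) → T
  node_bij : Function.Bijective (fun x : N × Multiset (E × T) => node x.1 x.2)
  ind : ∀ P : T → Prop, (∀ Y M, (∀ x ∈ M, P x.2) → P (node Y M)) → ∀ τ, P τ

namespace GTree

/-- Multilinear expansion of a list of edge-decorated linear combinations of trees into a
linear combination of branch multisets. -/
noncomputable def expandAux {N E : Type} (S : GTree N E) :
    List (E × (S.T →₀ ℝ)) → (Multiset (E × S.T) →₀ ℝ)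
  | [] => Finsupp.single 0 1
  | (e, w) :: L =>
      w.sum fun τ' c => (S.expandAux L).sum fun M c' => Finsupp.single ((e, τ') ::ₘ M) (c * c')

/-- Defining recursion of the functorial extension `𝔗(A)` of a linear map `A` between
the free vector spaces on the node species. -/
def MapSpec {N N' E : Type} (S : GTree N E) (S' : GTree N' E)
    (A : N → (N' →₀ ℝ)) (TA : S.T → (S'.T →₀ ℝ)) : Prop :=
  ∀ (Y : N) (L : List (E × S.T)),
    TA (S.node Y ↑L) =
      (A Y).sum fun Y' c =>
        (S'.expandAux (L.map fun x => (x.1, TA x.2))).sum fun M c' =>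
          Finsupp.single (S'.node Y' M) (c * c')

/-- Defining recursion of the inner product on `𝔗(𝖭,𝖤)` induced by an inner product on
the node species. -/
def IPSpec {N E : Type} (S : GTree N E) (ipN : N → N → ℝ) (ip : S.T → S.T → ℝ) : Prop :=
  ∀ (Y Y' : N) (L L' : List (E × S.T)),
    ip (S.node Y ↑L) (S.node Y' ↑L') =
      ipN Y Y' * ∑ s : Fin L.length ≃ Fin L'.length,
        ∏ j : Fin L.length,
          (if (L.get j).1 = (L'.get (s j)).1 then ip (L.get j).2 (L'.get (s j)).2 else 0)

end GTree

/-!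
Both identities are proved by induction on the tree whose branches the adjoint operator acts on
(`σ` for grafting/cutting, `τ` for raising/lowering), comparing root terms with root terms and
branch terms with branch terms of the two recursions. The common mechanism: if a vector is carried
by the trees obtained by attaching a branch `b` along an `o`-edge to a fixed trunk, then its
coefficient at `σ`, multiplied by `S(σ)`, is a sum over the branches of `σ` whose removal leaves
that trunk, since the multiplicity of the attached branch is exactly `S(σ) / (S(b) S(trunk))`.
Applied on both sides, the branch terms become one double sum over pairs of branches, read in the
two orders. The root terms match by `C(k,ℓ) ℓ! (k-ℓ)! = k!` and `(k+e_i)! = (k[i]+1) k!`.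
-/

open Finset

section MultiIndex

variable {d : ℕ}

theorem mfact_pos (k : MIdx d) : 0 < mfact k :=
  prod_pos fun i _ => Nat.factorial_pos (k i)

theorem mfact_add_munit (k : MIdx d) (i : Fin (d+1)) :
    mfact (k + munit i) = (k i + 1) * mfact k := by
  unfold mfact
  rw [Fintype.prod_eq_mul_prod_compl i,
    Fintype.prod_eq_mul_prod_compl i (fun j => (k j).factorial)]
  have hrest : ∀ j ∈ ({i}ᶜ : Finset (Fin (d+1))),
      ((k + munit i) j).factorial = (k j).factorial :=
    fun j hj => by simp_all [munit]
  rw [prod_congr rfl hrest]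
  simp [munit, Nat.factorial_succ, mul_assoc]

theorem tsub_munit_add_munit {k : MIdx d} {i : Fin (d+1)} (h : k i ≠ 0) :
    k - munit i + munit i = k := by
  funext j
  by_cases hj : j = i
  · subst hj
    simp only [munit, Pi.add_apply, Pi.sub_apply, Pi.single_eq_same]
    omega
  · simp [munit, hj]

theorem mchoose_mul_mfact_mul_mfact {k l : MIdx d} (h : l ≤ k) :
    mchoose k l * mfact l * mfact (k - l) = mfact k := by
  simp only [mchoose, mfact, ← prod_mul_distrib]
  exact prod_congr rfl fun i _ => Nat.choose_mul_factorial_mul_factorial (h i)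

theorem msum_eq_sum_Iic {A : Type*} [AddCommMonoid A] (m : MIdx d) (f : MIdx d → A) :
    msum m f = ∑ ℓ ∈ Iic m, f ℓ := by
  refine sum_nbij' (fun e i => (e i : ℕ)) (fun ℓ i => ⟨min (ℓ i) (m i), by omega⟩)
    ?_ ?_ ?_ ?_ ?_
  · intro e _; simpa [Pi.le_def] using fun i => Nat.lt_succ_iff.mp (e i).isLt
  · simp
  · intro e _; ext i; simp [Nat.lt_succ_iff.mp (e i).isLt]
  · intro ℓ h; ext i; simp [(mem_Iic.mp h) i]
  · intros; rfl

end MultiIndex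

section FinsuppPairing

variable {α R : Type*} [DecidableEq α] [Semiring R]

theorem sum_mul_ite_eq (w : α →₀ R) (a : α) (f : α → R) :
    (w.sum fun x c => c * if x = a then f x else 0) = w a * f a :=
  (Finsupp.sum_eq_single a (fun x _ hx => by simp [hx]) (by simp)).trans (by simp)

theorem sum_mul_ite_eq' (w : α →₀ R) (a : α) (u : R) :
    (w.sum fun x c => c * if a = x then u else 0) = w a * u :=
  (Finsupp.sum_eq_single a (fun x _ hx => by simp [Ne.symm hx]) (by simp)).trans (by simp)

theorem sum_mul_ite_mul_ite_eq (w : α × α →₀ R) (a b : α) (u v : R) :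
    (w.sum fun x c => c * ((if a = x.1 then u else 0) * (if b = x.2 then v else 0))) =
      w (a, b) * u * v := by
  refine (Finsupp.sum_eq_single (a, b) (fun x _ hx => ?_) (by simp)).trans (by simp [mul_assoc])
  by_cases ha : a = x.1
  · rw [if_neg (show b ≠ x.2 from fun hb => hx (Prod.ext ha.symm hb.symm)), mul_zero, mul_zero]
  · rw [if_neg ha, zero_mul, mul_zero]

end FinsuppPairing

theorem sum_ite_get_eq_count_mul {α R : Type*} [DecidableEq α] [NonAssocSemiring R]
    (L : List α) (x : α) (c : R) :
    ∑ j : Fin L.length, (if L.get j = x then c else 0) = L.count x * c := by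
  simp only [List.get_eq_getElem]
  rw [Fin.sum_univ_fun_getElem L (fun y => if y = x then c else 0),
    List.sum_map_eq_nsmul_single x _ fun _ h _ => if_neg h]
  simp

theorem coe_get_cons_eraseIdx {α : Type*} (L : List α) (j : Fin L.length) :
    L.get j ::ₘ (L.eraseIdx j : Multiset α) = L :=
  Multiset.coe_eq_coe.mpr (by simpa using List.getElem_cons_eraseIdx_perm j.isLt)

theorem coe_set_eq_cons_eraseIdx {α : Type*} (L : List α) (j : Fin L.length) (x : α) :
    (L.set j x : Multiset α) = x ::ₘ (L.eraseIdx j : Multiset α) :=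
  Multiset.coe_eq_coe.mpr (List.set_perm_cons_eraseIdx j.isLt x)

namespace TreeV

variable {Lp Dr : Type} {d : ℕ} (S : TreeV Lp Dr d)

theorem node_inj_iff {l l' : Dr} {k k' : MIdx d} {M M' : Multiset (Odx Lp d × S.V)} :
    S.node l k M = S.node l' k' M' ↔ l = l' ∧ k = k' ∧ M = M' :=
  ⟨fun h => by simpa using S.node_bij.injective (a₁ := (l, k, M)) (a₂ := (l', k', M')) h,
    fun ⟨hl, hk, hM⟩ => hl ▸ hk ▸ hM ▸ rfl⟩

theorem exists_eq_node (τ : S.V) :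
    ∃ (l : Dr) (k : MIdx d) (L : List (Odx Lp d × S.V)), τ = S.node l k ↑L := by
  obtain ⟨⟨l, k, M⟩, h⟩ := S.node_bij.surjective τ
  exact ⟨l, k, M.toList, by rw [Multiset.coe_toList]; exact h.symm⟩

theorem induction_on_list {P : S.V → Prop}
    (node : ∀ l k (L : List (Odx Lp d × S.V)), (∀ x ∈ L, P x.2) → P (S.node l k ↑L))
    (τ : S.V) :
    P τ :=
  S.ind P (fun l k M hM => by
    simpa using node l k M.toList fun x hx => hM x (Multiset.mem_toList.mp hx)) τ

theorem node_cons_injective (l : Dr) (k : MIdx d) (o : Odx Lp d)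
    (R : Multiset (Odx Lp d × S.V)) :
    Function.Injective fun b => S.node l k ((o, b) ::ₘ R) := fun b b' h => by
  simpa using ((node_inj_iff S).mp h).2.2

theorem replace_eq_mapDomain (l : Dr) (k : MIdx d) (L : List (Odx Lp d × S.V))
    (j : Fin L.length) (w : S.V →₀ ℝ) :
    S.replace l k L j w =
      Finsupp.mapDomain (fun b => S.node l k (((L.get j).1, b) ::ₘ ↑(L.eraseIdx j))) w := by
  simp only [replace, Finsupp.mapDomain, coe_set_eq_cons_eraseIdx]

variable [DecidableEq Lp] [DecidableEq S.V] {sym : S.V → ℕ}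

theorem sym_node_add_munit (hsym : S.SymSpec sym) (l : Dr) (k : MIdx d)
    (M : Multiset (Odx Lp d × S.V)) (i : Fin (d+1)) :
    sym (S.node l (k + munit i) M) = (k i + 1) * sym (S.node l k M) := by
  rw [hsym, hsym, mfact_add_munit, mul_assoc]

theorem sym_node_cons (hsym : S.SymSpec sym) (l : Dr) (k : MIdx d) (x : Odx Lp d × S.V)
    (M : Multiset (Odx Lp d × S.V)) :
    sym (S.node l k (x ::ₘ M)) = (M.count x + 1) * sym x.2 * sym (S.node l k M) := by
  set f : Odx Lp d × S.V → ℕ → ℕ := fun y n => n.factorial * sym y.2 ^ n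
  have hsub :
      ∏ y ∈ M.toFinset, f y (M.count y) = ∏ y ∈ (x ::ₘ M).toFinset, f y (M.count y) :=
    prod_subset (by simp [Multiset.toFinset_cons, subset_insert]) fun y _ hy => by
      simp [f, Multiset.count_eq_zero.mpr (by simpa using hy)]
  have hcons : ∀ y ∈ (x ::ₘ M).toFinset, f y ((x ::ₘ M).count y) =
      f y (M.count y) * if y = x then (M.count x + 1) * sym x.2 else 1 := by
    intro y _
    by_cases hy : y = x
    · subst hy
      simp only [Multiset.count_cons_self, Nat.factorial_succ, pow_succ, ↓reduceIte, f]
      ring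
    · simp [f, hy]
  rw [hsym, hsym, hsub, prod_congr rfl hcons, prod_mul_distrib, prod_ite_eq' _ x]
  simp only [Multiset.toFinset_cons, mem_insert, Multiset.mem_toFinset, true_or, ↓reduceIte]
  ring

theorem apply_mul_sym_eq_sum_of_node_cons (hsym : S.SymSpec sym) {c g : S.V → ℝ} {o : Odx Lp d}
    {lb : Dr} {kb : MIdx d} {Rb : Multiset (Odx Lp d × S.V)}
    (hc : ∀ b, c (S.node lb kb ((o, b) ::ₘ Rb)) = g b)
    (hc0 : ∀ σ, (∀ b, S.node lb kb ((o, b) ::ₘ Rb) ≠ σ) → c σ = 0)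
    (l : Dr) (k : MIdx d) (L : List (Odx Lp d × S.V)) :
    c (S.node l k ↑L) * sym (S.node l k ↑L) =
      ∑ j : Fin L.length,
        if (L.get j).1 = o ∧ S.node l k ↑(L.eraseIdx j) = S.node lb kb Rb then
          g (L.get j).2 * sym (L.get j).2 * sym (S.node lb kb Rb)
        else 0 := by
  have hdecomp : ∀ j : Fin L.length,
      (L.get j).1 = o ∧ S.node l k ↑(L.eraseIdx j) = S.node lb kb Rb ↔
      S.node lb kb ((o, (L.get j).2) ::ₘ Rb) = S.node l k ↑L ∧ (L.get j).1 = o := by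
    intro j
    simp only [node_inj_iff, ← coe_get_cons_eraseIdx L j]
    constructor
    · rintro ⟨rfl, rfl, rfl, rfl⟩; exact ⟨⟨rfl, rfl, rfl⟩, rfl⟩
    · rintro ⟨⟨rfl, rfl, h⟩, rfl⟩
      exact ⟨rfl, rfl, rfl, ((Multiset.cons_inj_right _).mp h).symm⟩
  by_cases hnode : ∃ b, S.node lb kb ((o, b) ::ₘ Rb) = S.node l k ↑L
  · obtain ⟨b, hb⟩ := hnode
    have hterm : ∀ j : Fin L.length,
        (if (L.get j).1 = o ∧ S.node l k ↑(L.eraseIdx j) = S.node lb kb Rb then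
          g (L.get j).2 * sym (L.get j).2 * sym (S.node lb kb Rb) else 0) =
        if L.get j = (o, b) then g b * sym b * sym (S.node lb kb Rb) else 0 := by
      intro j
      have hiff : ((L.get j).1 = o ∧ S.node l k ↑(L.eraseIdx j) = S.node lb kb Rb) ↔
          L.get j = (o, b) := by
        rw [hdecomp, ← hb, node_inj_iff]
        simp [Prod.ext_iff, and_comm]
      by_cases h : L.get j = (o, b)
      · rw [if_pos (hiff.mpr h), if_pos h, h]
      · rw [if_neg (mt hiff.mp h), if_neg h]
    obtain ⟨rfl, rfl, hL⟩ := (node_inj_iff S).mp hb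
    rw [sum_congr rfl fun j _ => hterm j, sum_ite_get_eq_count_mul, ← Multiset.coe_count, ← hL,
      hc, sym_node_cons S hsym, Multiset.count_cons_self]
    push_cast
    ring
  · push Not at hnode
    rw [hc0 _ hnode, zero_mul]
    refine (sum_eq_zero fun j _ => if_neg fun h => hnode _ ((hdecomp j).mp h).1).symm

theorem replace_apply_mul_sym (hsym : S.SymSpec sym) (lb : Dr) (kb : MIdx d)
    (Lb : List (Odx Lp d × S.V)) (j : Fin Lb.length) (w : S.V →₀ ℝ)
    (l : Dr) (k : MIdx d) (L : List (Odx Lp d × S.V)) :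
    S.replace lb kb Lb j w (S.node l k ↑L) * sym (S.node l k ↑L) =
      ∑ j' : Fin L.length,
        if (L.get j').1 = (Lb.get j).1 ∧
            S.node l k ↑(L.eraseIdx j') = S.node lb kb ↑(Lb.eraseIdx j) then
          w (L.get j').2 * sym (L.get j').2 * sym (S.node lb kb ↑(Lb.eraseIdx j))
        else 0 := by
  rw [replace_eq_mapDomain]
  exact S.apply_mul_sym_eq_sum_of_node_cons hsym
    (fun b => Finsupp.mapDomain_apply (S.node_cons_injective ..) w b)
    (fun σ hσ => Finsupp.mapDomain_of_notMem_range _ _ fun ⟨b, hb⟩ => hσ b hb) l k L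

theorem sum_single_set_apply_mul_sym (hsym : S.SymSpec sym) (lb : Dr) (kb : MIdx d)
    (Lb : List (Odx Lp d × S.V)) (j : Fin Lb.length) (w : S.V × S.V →₀ ℝ) (τ : S.V)
    (l : Dr) (k : MIdx d) (L : List (Odx Lp d × S.V)) :
    (w.sum fun ab c => Finsupp.single (ab.1, S.node lb kb ↑(Lb.set j ((Lb.get j).1, ab.2))) c)
        (τ, S.node l k ↑L) * sym (S.node l k ↑L) =
      ∑ j' : Fin L.length,
        if (L.get j').1 = (Lb.get j).1 ∧
            S.node l k ↑(L.eraseIdx j') = S.node lb kb ↑(Lb.eraseIdx j) then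
          w (τ, (L.get j').2) * sym (L.get j').2 * sym (S.node lb kb ↑(Lb.eraseIdx j))
        else 0 := by
  set Φ := fun b => S.node lb kb (((Lb.get j).1, b) ::ₘ ↑(Lb.eraseIdx j))
  have hΦ : Function.Injective (Prod.map (id : S.V → S.V) Φ) :=
    Function.injective_id.prodMap (S.node_cons_injective ..)
  have hmap : (w.sum fun ab c =>
      Finsupp.single (ab.1, S.node lb kb ↑(Lb.set j ((Lb.get j).1, ab.2))) c) =
      Finsupp.mapDomain (Prod.map (id : S.V → S.V) Φ) w := by
    simp only [Finsupp.mapDomain, coe_set_eq_cons_eraseIdx, Φ, Prod.map, id]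
  rw [hmap]
  exact S.apply_mul_sym_eq_sum_of_node_cons hsym
    (c := fun σ => Finsupp.mapDomain (Prod.map (id : S.V → S.V) Φ) w (τ, σ))
    (fun b => Finsupp.mapDomain_apply hΦ w (τ, b))
    (fun σ hσ => Finsupp.mapDomain_of_notMem_range _ _ fun ⟨ab, hab⟩ =>
      hσ ab.2 (congrArg Prod.snd hab))
    l k L


theorem sum_sum_ite_branch_comm (F G : S.V → S.V → ℝ) (c : ℝ)
    (l : Dr) (k : MIdx d) (L : List (Odx Lp d × S.V))
    (l' : Dr) (k' : MIdx d) (L' : List (Odx Lp d × S.V))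
    (h : ∀ x ∈ L, ∀ x' ∈ L', F x.2 x'.2 * sym x'.2 = G x'.2 x.2 * c * sym x.2) :
    ∑ j : Fin L.length, ∑ j' : Fin L'.length,
      (if (L'.get j').1 = (L.get j).1 ∧
          S.node l' k' ↑(L'.eraseIdx j') = S.node l k ↑(L.eraseIdx j) then
        F (L.get j).2 (L'.get j').2 * sym (L'.get j').2 * sym (S.node l k ↑(L.eraseIdx j))
      else 0) =
    ∑ j' : Fin L'.length, (∑ j : Fin L.length,
      if (L.get j).1 = (L'.get j').1 ∧
          S.node l k ↑(L.eraseIdx j) = S.node l' k' ↑(L'.eraseIdx j') then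
        G (L'.get j').2 (L.get j).2 * sym (L.get j).2 * sym (S.node l' k' ↑(L'.eraseIdx j'))
      else 0) * c := by
  rw [sum_comm]
  refine sum_congr rfl fun j' _ => ?_
  rw [sum_mul]
  refine sum_congr rfl fun j _ => ?_
  by_cases hmatch : (L.get j).1 = (L'.get j').1 ∧
      S.node l k ↑(L.eraseIdx j) = S.node l' k' ↑(L'.eraseIdx j')
  · rw [if_pos ⟨hmatch.1.symm, hmatch.2.symm⟩, if_pos hmatch, hmatch.2,
      h _ (L.get_mem j) _ (L'.get_mem j')]
    ring
  · rw [if_neg fun h' => hmatch ⟨h'.1.symm, h'.2.symm⟩, if_neg hmatch, zero_mul]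


theorem mchoose_mul_mfact_mul_sym_node_tsub (hsym : S.SymSpec sym) {k ℓ : MIdx d} (h : ℓ ≤ k)
    (l : Dr) (M : Multiset (Odx Lp d × S.V)) :
    (mchoose k ℓ : ℝ) * mfact ℓ * sym (S.node l (k - ℓ) M) = sym (S.node l k M) := by
  rw [hsym, hsym, ← mchoose_mul_mfact_mul_mfact h]
  push_cast
  ring

theorem sum_Iic_graftRoot_eq_cutRoot_term (hsym : S.SymSpec sym) (t : Lp) (p : MIdx d) (τ : S.V)
    (l : Dr) (k : MIdx d) (M : Multiset (Odx Lp d × S.V))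
    (l' : Dr) (k' : MIdx d) (E' : Multiset (Odx Lp d × S.V)) (x' : Odx Lp d × S.V) :
    ∑ ℓ ∈ Iic (k ⊓ p),
      (if x'.1 = (t, p - ℓ) ∧ S.node l' k' E' = S.node l (k - ℓ) M then
        (mchoose k ℓ : ℝ) * (if τ = x'.2 then 1 else 0) * sym x'.2 * sym (S.node l (k - ℓ) M)
      else 0) =
    (if x'.1.1 = t ∧ x'.1.2 ≤ p then
      (mfact (p - x'.1.2) : ℝ)⁻¹ •
        Finsupp.single (x'.2, S.node l' (k' + (p - x'.1.2)) E') (1 : ℝ)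
    else 0) (τ, S.node l k M) * sym τ * sym (S.node l k M) := by
  obtain ⟨⟨a, q⟩, b'⟩ := x'
  by_cases hcutTerm : a = t ∧ q ≤ p ∧ b' = τ ∧ S.node l' (k' + (p - q)) E' = S.node l k M
  · obtain ⟨rfl, hq, rfl, hnode⟩ := hcutTerm
    obtain ⟨rfl, rfl, rfl⟩ := (node_inj_iff S).mp hnode
    have hℓ : p - q ∈ Iic ((k' + (p - q)) ⊓ p) :=
      mem_Iic.mpr (le_inf le_add_self tsub_le_self)
    have hmatch : (a, q) = (a, p - (p - q)) ∧
        S.node l' k' E' = S.node l' (k' + (p - q) - (p - q)) E' := by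
      rw [tsub_tsub_cancel_of_le hq, add_tsub_cancel_right]; exact ⟨rfl, rfl⟩
    dsimp only
    rw [sum_eq_single_of_mem (p - q) hℓ]
    · rw [if_pos hmatch, if_pos (And.intro rfl hq), Finsupp.smul_apply, Finsupp.single_eq_same,
        smul_eq_mul, if_pos rfl,
        ← mchoose_mul_mfact_mul_sym_node_tsub S hsym le_add_self l' E']
      have := (mfact_pos (p - q)).ne'
      field_simp
    · intro ℓ hℓ hne
      refine if_neg fun h => hne ?_
      have hq' : q = p - ℓ := by simpa using h.1
      rw [hq', tsub_tsub_cancel_of_le (le_inf_iff.mp (mem_Iic.mp hℓ)).2]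
  · have hRHS : (if a = t ∧ q ≤ p then
          (mfact (p - q) : ℝ)⁻¹ • Finsupp.single (b', S.node l' (k' + (p - q)) E') (1 : ℝ)
        else 0) (τ, S.node l k M) = 0 := by
      split_ifs with hcond
      · rw [Finsupp.smul_apply, Finsupp.single_apply, if_neg, smul_zero]
        intro h
        simp only [Prod.mk.injEq] at h
        exact hcutTerm ⟨hcond.1, hcond.2, h.1, h.2⟩
      · rfl
    dsimp only
    rw [hRHS, zero_mul, zero_mul]
    refine sum_eq_zero fun ℓ hℓ => ite_eq_right_iff.mpr fun ⟨h1, h2⟩ => ?_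
    rw [if_neg, mul_zero, zero_mul, zero_mul]
    rintro rfl
    obtain ⟨hℓk, hℓp⟩ := le_inf_iff.mp (mem_Iic.mp hℓ)
    obtain ⟨rfl, rfl⟩ : a = t ∧ q = p - ℓ := by simpa using h1
    obtain ⟨rfl, rfl, rfl⟩ := (node_inj_iff S).mp h2
    refine hcutTerm ⟨rfl, tsub_le_self, rfl, ?_⟩
    rw [tsub_tsub_cancel_of_le hℓp, tsub_add_cancel_of_le hℓk]


theorem graftRoot_apply_mul_sym (hsym : S.SymSpec sym) (t : Lp) (p : MIdx d) (τ : S.V)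
    (l : Dr) (k : MIdx d) (M : Multiset (Odx Lp d × S.V))
    (l' : Dr) (k' : MIdx d) (L' : List (Odx Lp d × S.V)) :
    (msum (k ⊓ p) fun ℓ => (mchoose k ℓ : ℝ) •
        Finsupp.single (S.node l (k - ℓ) (((t, p - ℓ), τ) ::ₘ M)) (1 : ℝ))
      (S.node l' k' ↑L') * sym (S.node l' k' ↑L') =
    (∑ j' : Fin L'.length,
      if (L'.get j').1.1 = t ∧ (L'.get j').1.2 ≤ p then
        (mfact (p - (L'.get j').1.2) : ℝ)⁻¹ •
          Finsupp.single ((L'.get j').2,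
            S.node l' (k' + (p - (L'.get j').1.2)) ↑(L'.eraseIdx j')) (1 : ℝ)
      else 0) (τ, S.node l k M) * sym τ * sym (S.node l k M) := by
  rw [msum_eq_sum_Iic, Finset.sum_apply', sum_mul, Finset.sum_apply', sum_mul, sum_mul]
  have hnode : ∀ ℓ ∈ Iic (k ⊓ p),
      ((mchoose k ℓ : ℝ) •
          Finsupp.single (S.node l (k - ℓ) (((t, p - ℓ), τ) ::ₘ M)) (1 : ℝ))
        (S.node l' k' ↑L') * sym (S.node l' k' ↑L') =
      ∑ j' : Fin L'.length,
        if (L'.get j').1 = (t, p - ℓ) ∧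
            S.node l' k' ↑(L'.eraseIdx j') = S.node l (k - ℓ) M then
          (mchoose k ℓ : ℝ) * (if τ = (L'.get j').2 then 1 else 0) * sym (L'.get j').2 *
            sym (S.node l (k - ℓ) M)
        else 0 := fun ℓ _ =>
    S.apply_mul_sym_eq_sum_of_node_cons hsym
      (c := ⇑((mchoose k ℓ : ℝ) •
        Finsupp.single (S.node l (k - ℓ) (((t, p - ℓ), τ) ::ₘ M)) (1 : ℝ)))
      (g := fun b => (mchoose k ℓ : ℝ) * if τ = b then 1 else 0)
      (fun b => by
        simp only [Finsupp.smul_apply, Finsupp.single_apply,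
          (S.node_cons_injective l (k - ℓ) (t, p - ℓ) M).eq_iff, smul_eq_mul])
      (fun σ hσ => by rw [Finsupp.smul_apply, Finsupp.single_eq_of_ne (hσ τ).symm, smul_zero])
      l' k' L'
  rw [sum_congr rfl hnode, sum_comm]
  exact sum_congr rfl fun j' _ => S.sum_Iic_graftRoot_eq_cutRoot_term hsym t p τ l k M l' k' _ _

theorem raiseRoot_apply_mul_sym (hsym : S.SymSpec sym) (i : Fin (d+1))
    (lb : Dr) (kb : MIdx d) (Mb : Multiset (Odx Lp d × S.V))
    (l : Dr) (k : MIdx d) (M : Multiset (Odx Lp d × S.V)) :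
    Finsupp.single (S.node lb (kb + munit i) Mb) (1 : ℝ) (S.node l k M) * sym (S.node l k M) =
    ((k i : ℝ) • Finsupp.single (S.node l (k - munit i) M) (1 : ℝ)) (S.node lb kb Mb) *
      sym (S.node lb kb Mb) := by
  rw [Finsupp.smul_apply, Finsupp.single_apply, Finsupp.single_apply, smul_eq_mul]
  by_cases hraise : S.node lb (kb + munit i) Mb = S.node l k M
  · obtain ⟨rfl, rfl, rfl⟩ := (node_inj_iff S).mp hraise
    rw [if_pos rfl, add_tsub_cancel_right, if_pos rfl, sym_node_add_munit S hsym]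
    simp [munit]
  · rw [if_neg hraise, zero_mul]
    split_ifs with hlow
    · obtain ⟨rfl, rfl, rfl⟩ := (node_inj_iff S).mp hlow
      have hki : k i = 0 := by
        by_contra hki
        exact hraise (by rw [tsub_munit_add_munit hki])
      simp [hki]
    · simp

theorem graft_apply_mul_sym (hsym : S.SymSpec sym)
    {graft : Odx Lp d → S.V → S.V → (S.V →₀ ℝ)} (hgraft : S.GraftSpec graft)
    {cut : Odx Lp d → S.V → (S.V × S.V →₀ ℝ)} (hcut : S.CutSpec cut) (σ : S.V) :
    ∀ (t : Lp) (p : MIdx d) (τ τb : S.V),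
      graft (t, p) τ τb σ * sym σ = cut (t, p) σ (τ, τb) * sym τ * sym τb := by
  induction σ using S.induction_on_list with
  | node l' k' L' ih =>
  intro t p τ τb
  obtain ⟨l, k, L, rfl⟩ := S.exists_eq_node τb
  rw [hgraft, hcut, Finsupp.add_apply, Finsupp.add_apply, add_mul, add_mul, add_mul,
    S.graftRoot_apply_mul_sym hsym]
  congr 1
  calc (∑ j : Fin L.length, S.replace l k L j (graft (t, p) τ (L.get j).2))
          (S.node l' k' ↑L') * sym (S.node l' k' ↑L')
      = ∑ j : Fin L.length, ∑ j' : Fin L'.length,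
          if (L'.get j').1 = (L.get j).1 ∧
              S.node l' k' ↑(L'.eraseIdx j') = S.node l k ↑(L.eraseIdx j) then
            graft (t, p) τ (L.get j).2 (L'.get j').2 * sym (L'.get j').2 *
              sym (S.node l k ↑(L.eraseIdx j))
          else 0 := by
        rw [Finset.sum_apply', sum_mul]
        exact sum_congr rfl fun j _ => S.replace_apply_mul_sym hsym l k L j _ l' k' L'
    _ = ∑ j' : Fin L'.length, (∑ j : Fin L.length,
          if (L.get j).1 = (L'.get j').1 ∧
              S.node l k ↑(L.eraseIdx j) = S.node l' k' ↑(L'.eraseIdx j') then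
            cut (t, p) (L'.get j').2 (τ, (L.get j).2) * sym (L.get j).2 *
              sym (S.node l' k' ↑(L'.eraseIdx j'))
          else 0) * sym τ :=
        S.sum_sum_ite_branch_comm (fun b b' => graft (t, p) τ b b')
          (fun b' b => cut (t, p) b' (τ, b)) _ l k L l' k' L'
          fun x _ x' hx' => ih x' hx' t p τ x.2
    _ = _ := by
        rw [Finset.sum_apply', sum_mul, sum_mul]
        refine sum_congr rfl fun j' _ => ?_
        rw [mul_right_comm, S.sum_single_set_apply_mul_sym hsym]

theorem raise_apply_mul_sym (hsym : S.SymSpec sym)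
    {raise : Fin (d+1) → S.V → (S.V →₀ ℝ)} (hraise : S.RaiseSpec raise)
    {low : Fin (d+1) → S.V → (S.V →₀ ℝ)} (hlow : S.LowSpec low) (τ : S.V) :
    ∀ (i : Fin (d+1)) (τb : S.V), raise i τb τ * sym τ = low i τ τb * sym τb := by
  induction τ using S.induction_on_list with
  | node l k L ih =>
  intro i τb
  obtain ⟨lb, kb, Lb, rfl⟩ := S.exists_eq_node τb
  rw [hraise, hlow, Finsupp.add_apply, Finsupp.add_apply, add_mul, add_mul,
    S.raiseRoot_apply_mul_sym hsym]
  congr 1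
  calc (∑ j : Fin Lb.length, S.replace lb kb Lb j (raise i (Lb.get j).2)) (S.node l k ↑L) *
        sym (S.node l k ↑L)
      = ∑ j : Fin Lb.length, ∑ j' : Fin L.length,
          if (L.get j').1 = (Lb.get j).1 ∧
              S.node l k ↑(L.eraseIdx j') = S.node lb kb ↑(Lb.eraseIdx j) then
            raise i (Lb.get j).2 (L.get j').2 * sym (L.get j').2 *
              sym (S.node lb kb ↑(Lb.eraseIdx j))
          else 0 := by
        rw [Finset.sum_apply', sum_mul]
        exact sum_congr rfl fun j _ => S.replace_apply_mul_sym hsym lb kb Lb j _ l k L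
    _ = ∑ j' : Fin L.length, (∑ j : Fin Lb.length,
          if (Lb.get j).1 = (L.get j').1 ∧
              S.node lb kb ↑(Lb.eraseIdx j) = S.node l k ↑(L.eraseIdx j') then
            low i (L.get j').2 (Lb.get j).2 * sym (Lb.get j).2 *
              sym (S.node l k ↑(L.eraseIdx j'))
          else 0) * 1 :=
        S.sum_sum_ite_branch_comm (fun b b' => raise i b b') (fun b' b => low i b' b) 1
          lb kb Lb l k L fun x _ x' hx' => by rw [mul_one]; exact ih x' hx' i x.2
    _ = _ := by
        rw [Finset.sum_apply', sum_mul]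
        exact sum_congr rfl fun j' _ => by
          rw [mul_one, S.replace_apply_mul_sym hsym l k L j' _ lb kb Lb]

end TreeV

theorem statement15_general
    {d : ℕ} {Lp Dr : Type} [DecidableEq Lp]
    (S : TreeV Lp Dr d) [DecidableEq S.V]
    (sym : S.V → ℕ) (hsym : S.SymSpec sym)
    (graft : Odx Lp d → S.V → S.V → (S.V →₀ ℝ)) (hgraft : S.GraftSpec graft)
    (cutV : Odx Lp d → S.V → (S.V × S.V →₀ ℝ)) (hcutV : S.CutSpec cutV)
    (raiseV : Fin (d+1) → S.V → (S.V →₀ ℝ)) (hraiseV : S.RaiseSpec raiseV)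
    (lowV : Fin (d+1) → S.V → (S.V →₀ ℝ)) (hlowV : S.LowSpec lowV) :
    (∀ (t : Lp) (p : MIdx d) (τ τb σ : S.V),
      ((graft (t, p) τ τb).sum fun τ'' c => c * (if τ'' = σ then (sym τ'' : ℝ) else 0)) =
        (cutV (t, p) σ).sum fun ab c =>
          c * ((if τ = ab.1 then (sym τ : ℝ) else 0) *
            (if τb = ab.2 then (sym τb : ℝ) else 0))) ∧
    ∀ (i : Fin (d+1)) (τ τb : S.V),
      ((raiseV i τb).sum fun τ'' c => c * (if τ'' = τ then (sym τ'' : ℝ) else 0)) =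
        (lowV i τ).sum fun τ'' c => c * (if τb = τ'' then (sym τb : ℝ) else 0) := by
  refine ⟨fun t p τ τb σ => ?_, fun i τ τb => ?_⟩
  · rw [sum_mul_ite_eq, sum_mul_ite_mul_ite_eq]
    exact S.graft_apply_mul_sym hsym hgraft hcutV σ t p τ τb
  · rw [sum_mul_ite_eq, sum_mul_ite_eq']
    exact S.raise_apply_mul_sym hsym hraiseV hlowV τ i τb

/-- Definitions `def_grafting_explicit`, `def_increasing_poly` and
Remark `rem:formula for hgraft`: duality between grafting/raising and cutting/lowering
on `𝕍`, with respect to the inner product for which distinct trees are orthogonal and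
`⟨τ,τ⟩ = S(τ)`: `⟨τ ⋖̂_{(𝔱,p)} τ̄, σ⟩ = ⟨τ ⊗ τ̄, ⋖̂*_{(𝔱,p)} σ⟩` and
`⟨↑̂_i τ̄, τ⟩ = ⟨τ̄, ↑̂*_i τ⟩`. -/
theorem statement15
    {d : ℕ} {Lp Dr : Type} [Fintype Lp] [DecidableEq Lp]
    (S : TreeV Lp Dr d) [DecidableEq S.V]
    (sym : S.V → ℕ) (hsym : S.SymSpec sym)
    (graft : Odx Lp d → S.V → S.V → (S.V →₀ ℝ)) (hgraft : S.GraftSpec graft)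
    (cutV : Odx Lp d → S.V → (S.V × S.V →₀ ℝ)) (hcutV : S.CutSpec cutV)
    (raiseV : Fin (d+1) → S.V → (S.V →₀ ℝ)) (hraiseV : S.RaiseSpec raiseV)
    (lowV : Fin (d+1) → S.V → (S.V →₀ ℝ)) (hlowV : S.LowSpec lowV) :
    (∀ (t : Lp) (p : MIdx d) (τ τb σ : S.V),
      ((graft (t, p) τ τb).sum fun τ'' c => c * (if τ'' = σ then (sym τ'' : ℝ) else 0)) =
        (cutV (t, p) σ).sum fun ab c =>
          c * ((if τ = ab.1 then (sym τ : ℝ) else 0) *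
            (if τb = ab.2 then (sym τb : ℝ) else 0))) ∧
    ∀ (i : Fin (d+1)) (τ τb : S.V),
      ((raiseV i τb).sum fun τ'' c => c * (if τ'' = τ then (sym τ'' : ℝ) else 0)) =
        (lowV i τ).sum fun τ'' c => c * (if τb = τ'' then (sym τb : ℝ) else 0) :=
  statement15_general S sym hsym graft hgraft cutV hcutV raiseV hraiseV lowV hlowV

end SPDERenorm
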